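/- arXiv:2102.00366 — 5 statements merged into one kernel-verified Lean document; each statement's English description precedes it below -/
import Mathlib

section
/- Let μ and ν be probability measures on a Polish space (X, F) and let γ be a coupling of μ and ν. If there exists a measurable set S ∈ F such that γ((Sᶜ × X) \ Δ) = 0 and γ((X × S) \ Δ) = 0, then γ is a maximal coupling, i.e. γ(Δ) = 1 − ‖μ − ν‖_TV. -/
/-!
Every coupling satisfies the coupling inequality `|μ A - ν A| ≤ γ Δᶜ`, hence `tvDist μ ν ≤ 1 - γ Δ`.
Conversely, the hypotheses on `S` say that `γ` restricted to `Sᶜ × X` and to `X × S` lives on the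
diagonal; these two pieces of `Δ` are disjoint and cover it, so `γ Δ = μ Sᶜ + ν S`, i.e.
`1 - γ Δ = μ S - ν S ≤ tvDist μ ν`.
-/

open MeasureTheory Set

noncomputable def tvDist {X : Type*} [MeasurableSpace X] (μ ν : Measure X) : ℝ :=
  ⨆ A : {s : Set X // MeasurableSet s}, |(μ A.1).toReal - (ν A.1).toReal|

namespace MeasureTheory

lemma diagonal_eq_union_inter_prod {X : Type*} (S : Set X) :
    diagonal X = (Sᶜ ×ˢ univ ∩ diagonal X) ∪ (univ ×ˢ S ∩ diagonal X) := by
  ext ⟨x, y⟩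
  simp only [mem_union, mem_inter_iff, mem_prod, mem_compl_iff, mem_univ, mem_diagonal_iff,
    and_true, true_and]
  constructor
  · rintro rfl
    exact (em (x ∈ S)).symm.imp (⟨·, rfl⟩) (⟨·, rfl⟩)
  · rintro (⟨-, h⟩ | ⟨-, h⟩) <;> exact h

lemma disjoint_inter_diagonal_prod {X : Type*} (S : Set X) :
    Disjoint (Sᶜ ×ˢ univ ∩ diagonal X) (univ ×ˢ S ∩ diagonal X) := by
  rw [disjoint_left]
  rintro ⟨x, y⟩ ⟨⟨hx, -⟩, rfl : x = y⟩ ⟨⟨-, hy⟩, -⟩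
  exact hx hy

variable {X : Type*} [MeasurableSpace X] {μ ν : Measure X} {γ : Measure (X × X)}

lemma abs_sub_le_tvDist [IsProbabilityMeasure μ] [IsProbabilityMeasure ν]
    {A : Set X} (hA : MeasurableSet A) : |μ.real A - ν.real A| ≤ tvDist μ ν := by
  refine le_ciSup (f := fun A : {s : Set X // MeasurableSet s} => |μ.real A.1 - ν.real A.1|)
    ⟨1, ?_⟩ ⟨A, hA⟩
  rintro _ ⟨B, rfl⟩
  exact abs_sub_le_of_nonneg_of_le measureReal_nonneg measureReal_le_one measureReal_nonneg
    measureReal_le_one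

lemma measureReal_le_add_measureReal_compl_diagonal [IsFiniteMeasure γ] {P Q : Set (X × X)}
    (h : P ∩ diagonal X ⊆ Q) : γ.real P ≤ γ.real Q + γ.real (diagonal X)ᶜ := by
  refine (measureReal_mono fun p hp => ?_).trans (measureReal_union_le Q _)
  by_cases hp' : p ∈ diagonal X
  · exact Or.inl (h ⟨hp, hp'⟩)
  · exact Or.inr hp'

lemma abs_sub_le_measureReal_compl_diagonal [IsFiniteMeasure γ]
    (hγ1 : ∀ A : Set X, MeasurableSet A → γ (A ×ˢ univ) = μ A)
    (hγ2 : ∀ A : Set X, MeasurableSet A → γ (univ ×ˢ A) = ν A)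
    {A : Set X} (hA : MeasurableSet A) :
    |μ.real A - ν.real A| ≤ γ.real (diagonal X)ᶜ := by
  have hμ : μ.real A = γ.real (A ×ˢ univ) := congrArg ENNReal.toReal (hγ1 A hA).symm
  have hν : ν.real A = γ.real (univ ×ˢ A) := congrArg ENNReal.toReal (hγ2 A hA).symm
  have hμν := measureReal_le_add_measureReal_compl_diagonal (γ := γ)
    (P := A ×ˢ univ) (Q := univ ×ˢ A) (by rintro ⟨x, y⟩ ⟨⟨hx, -⟩, rfl : x = y⟩; exact ⟨trivial, hx⟩)
  have hνμ := measureReal_le_add_measureReal_compl_diagonal (γ := γ)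
    (P := univ ×ˢ A) (Q := A ×ˢ univ) (by rintro ⟨x, y⟩ ⟨⟨-, hy⟩, rfl : x = y⟩; exact ⟨hy, trivial⟩)
  rw [abs_sub_le_iff, hμ, hν]
  constructor <;> linarith

lemma tvDist_le_measureReal_compl_diagonal [IsFiniteMeasure γ]
    (hγ1 : ∀ A : Set X, MeasurableSet A → γ (A ×ˢ univ) = μ A)
    (hγ2 : ∀ A : Set X, MeasurableSet A → γ (univ ×ˢ A) = ν A) :
    tvDist μ ν ≤ γ.real (diagonal X)ᶜ :=
  ciSup_le fun A => abs_sub_le_measureReal_compl_diagonal hγ1 hγ2 A.2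

lemma measure_diagonal_eq_of_offDiag_null
    (hγ1 : ∀ A : Set X, MeasurableSet A → γ (A ×ˢ univ) = μ A)
    (hγ2 : ∀ A : Set X, MeasurableSet A → γ (univ ×ˢ A) = ν A)
    (hΔ : MeasurableSet (diagonal X)) {S : Set X} (hS : MeasurableSet S)
    (h1 : γ ((Sᶜ ×ˢ univ) \ diagonal X) = 0) (h2 : γ ((univ ×ˢ S) \ diagonal X) = 0) :
    γ (diagonal X) = μ Sᶜ + ν S := by
  rw [diagonal_eq_union_inter_prod S,
    measure_union (disjoint_inter_diagonal_prod S) ((MeasurableSet.univ.prod hS).inter hΔ),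
    ← Set.sdiff_sdiff_right_self, ← Set.sdiff_sdiff_right_self, measure_sdiff_null h1,
    measure_sdiff_null h2, hγ1 _ hS.compl, hγ2 _ hS]

end MeasureTheory

theorem stmt2 {X : Type*} [MeasurableSpace X]
    (hΔ : MeasurableSet {p : X × X | p.1 = p.2})
    (μ ν : Measure X) [IsProbabilityMeasure μ] [IsProbabilityMeasure ν]
    (γ : Measure (X × X)) [IsProbabilityMeasure γ]
    (hγ1 : ∀ A : Set X, MeasurableSet A → γ (A ×ˢ univ) = μ A)
    (hγ2 : ∀ A : Set X, MeasurableSet A → γ (univ ×ˢ A) = ν A)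
    (S : Set X) (hS : MeasurableSet S)
    (h1 : γ ((Sᶜ ×ˢ univ) \ {p : X × X | p.1 = p.2}) = 0)
    (h2 : γ ((univ ×ˢ S) \ {p : X × X | p.1 = p.2}) = 0) :
    (γ {p : X × X | p.1 = p.2}).toReal = 1 - tvDist μ ν := by
  change γ.real (diagonal X) = _
  have hdiag : γ.real (diagonal X) = 1 - μ.real S + ν.real S := by
    rw [measureReal_def, measure_diagonal_eq_of_offDiag_null hγ1 hγ2 hΔ hS h1 h2,
      ENNReal.toReal_add (measure_ne_top _ _) (measure_ne_top _ _)]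
    exact congrArg (· + ν.real S) (probReal_compl_eq_one_sub hS)
  have hupper := tvDist_le_measureReal_compl_diagonal hγ1 hγ2
  rw [probReal_compl_eq_one_sub (s := diagonal X) hΔ] at hupper
  have hlower := (le_abs_self _).trans (abs_sub_le_tvDist (μ := μ) (ν := ν) hS)
  linarith
end

section
/- Let μ and ν be probability measures on a Polish space (X, F), and let γ ∈ Γ(μ, ν) be a coupling satisfying γ((Sᶜ × X) \ Δ) = γ((X × S) \ Δ) = 0 for some S ∈ F. Then the pair of finite measures μ^r(B) := γ((B × X) \ Δ) and ν^r(B) := γ((X × B) \ Δ) satisfies μ(B) − ν(B) = μ^r(B) − ν^r(B) for all B ∈ F, μ^r(Sᶜ) = 0, and ν^r(S) = 0; i.e., (S, Sᶜ) is a Hahn decomposition for the signed measure μ − ν. -/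
open MeasureTheory Set

theorem stmt3 {X : Type*} [MeasurableSpace X]
    (hΔ : MeasurableSet {p : X × X | p.1 = p.2})
    (μ ν : Measure X) [IsProbabilityMeasure μ] [IsProbabilityMeasure ν]
    (γ : Measure (X × X)) [IsProbabilityMeasure γ]
    (hγ1 : ∀ A : Set X, MeasurableSet A → γ (A ×ˢ univ) = μ A)
    (hγ2 : ∀ A : Set X, MeasurableSet A → γ (univ ×ˢ A) = ν A)
    (S : Set X) (hS : MeasurableSet S)
    (h1 : γ ((Sᶜ ×ˢ univ) \ {p : X × X | p.1 = p.2}) = 0)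
    (h2 : γ ((univ ×ˢ S) \ {p : X × X | p.1 = p.2}) = 0) :
    (∀ B : Set X, MeasurableSet B →
      (μ B).toReal - (ν B).toReal =
        (γ ((B ×ˢ univ) \ {p : X × X | p.1 = p.2})).toReal
          - (γ ((univ ×ˢ B) \ {p : X × X | p.1 = p.2})).toReal) ∧
    γ ((Sᶜ ×ˢ univ) \ {p : X × X | p.1 = p.2}) = 0 ∧
    γ ((univ ×ˢ S) \ {p : X × X | p.1 = p.2}) = 0 := by
  refine ⟨?_, h1, h2⟩
  intro B hB
  set D := {p : X × X | p.1 = p.2} with hD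
  have hsame : (B ×ˢ univ) ∩ D = (univ ×ˢ B) ∩ D := by
    ext ⟨x, y⟩
    simp only [mem_inter_iff, mem_prod, mem_univ, and_true, true_and, hD, mem_setOf_eq]
    constructor
    · rintro ⟨hx, rfl⟩; exact ⟨hx, rfl⟩
    · rintro ⟨hy, rfl⟩; exact ⟨hy, rfl⟩
  have e1 : γ ((B ×ˢ univ) ∩ D) + γ ((B ×ˢ univ) \ D) = μ B := by
    rw [measure_inter_add_diff _ hΔ, hγ1 B hB]
  have e2 : γ ((univ ×ˢ B) ∩ D) + γ ((univ ×ˢ B) \ D) = ν B := by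
    rw [measure_inter_add_diff _ hΔ, hγ2 B hB]
  have fin : ∀ A : Set (X × X), γ A ≠ ⊤ := fun A => measure_ne_top γ A
  rw [← e1, ← e2, hsame]
  rw [ENNReal.toReal_add (fin _) (fin _), ENNReal.toReal_add (fin _) (fin _)]
  ring
end

section
/- On X = {1,2,3} let P(1,·) = (1/2, 1/2, 0) and P(2,·) = (1/2, 0, 1/2), and let Q(1,·) = (0, 1/2, 1/2), Q(2,·) = (1/2, 0, 1/2). Let P̄ be the (unique maximal) coupling of P(1,·) and P(2,·) given by P̄(1,1) = 1/2 and P̄(2,3) = 1/2. Then there is no coupling of the random variables realizing P̄ as an accept/reject scheme over the maximal proposal coupling Q̄ with Q̄(2,1) = 1/2 and Q̄(3,3) = 1/2: formally, there do not exist random variables (x′,y′) ~ Q̄ and acceptance indicators (b_x, b_y) ∈ {0,1}² (with any conditional law given (x′,y′)) such that (b_x x′ + (1−b_x)·1, b_y y′ + (1−b_y)·2) ~ P̄. -/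
open Finset

/-- The maximal proposal coupling Q̄: mass 1/2 at (x′,y′) = (2,1) and at (3,3)
(states 1,2,3 are encoded as indices 0,1,2). -/
noncomputable def Qbar15 : Fin 3 → Fin 3 → ℝ :=
  fun i j => if (i = 1 ∧ j = 0) ∨ (i = 2 ∧ j = 2) then 1 / 2 else 0

/-- The maximal transition coupling P̄: mass 1/2 at (X,Y) = (1,1) and at (2,3). -/
noncomputable def Pbar15 : Fin 3 → Fin 3 → ℝ :=
  fun u v => if (u = 0 ∧ v = 0) ∨ (u = 1 ∧ v = 2) then 1 / 2 else 0

/-- with current states x = 1 (index 0) and y = 2 (index 1), no joint law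
ξ of (x′, y′, b_x, b_y) with proposal marginal Q̄ pushes forward to P̄ under the
accept/reject map. -/
theorem stmt15 :
    ¬ ∃ ξ : Fin 3 → Fin 3 → Bool → Bool → ℝ,
      (∀ i j bx by_, 0 ≤ ξ i j bx by_) ∧
      (∀ i j, ∑ bx, ∑ by_, ξ i j bx by_ = Qbar15 i j) ∧
      (∀ u v, ∑ i, ∑ j, ∑ bx, ∑ by_,
        (if (if bx then i else (0 : Fin 3)) = u ∧ (if by_ then j else (1 : Fin 3)) = v
          then ξ i j bx by_ else 0) = Pbar15 u v) := by
  rintro ⟨ξ, hpos, hmarg, hpush⟩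
  have h := hpush 1 2
  have hm := hmarg 1 2
  simp [Pbar15, Fin.sum_univ_three, Fin.forall_fin_two] at h
  simp [Qbar15, Fin.sum_univ_three] at hm
  have h1 := hpos 1 2 true false
  have h2 := hpos 1 2 false true
  have h3 := hpos 1 2 false false
  have h4 := hpos 1 2 true true
  linarith
end

section
/- Let P be an MH-like transition kernel on (X,F) generated by proposal kernel Q and acceptance function a with a(x,x)=1. Suppose Q̄ ∈ Γ(Q,Q) is a proposal-kernel coupling and B̄ is an acceptance-indicator coupling such that for all x,y and (b_x,b_y) ~ B̄((x,y),(x′,y′)): P(b_x = 1 | x,y,x′) = a(x,x′) for Q(x,·)-a.a. x′ and P(b_y = 1 | x,y,y′) = a(y,y′) for Q(y,·)-a.a. y′. Define P̄((x,y),·) as the law of (X,Y) = (b_x x′ + (1−b_x)x, b_y y′ + (1−b_y)y) with (x′,y′) ~ Q̄((x,y),·). Then P̄ ∈ Γ(P,P); that is, P̄((x,y), A × X) = P(x,A) and P̄((x,y), X × A) = P(y,A) for all A ∈ F. -/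
open MeasureTheory Set
open scoped ENNReal


private lemma key17 {X : Type*} [MeasurableSpace X] (ν : Measure X) [IsProbabilityMeasure ν]
    (a : X → ℝ≥0∞) (ha1 : ∀ z', a z' ≤ 1) (hameas : Measurable a)
    (μ : Measure (X × Bool)) [IsProbabilityMeasure μ]
    (hb : ∀ A : Set X, MeasurableSet A → μ {q | q.1 ∈ A ∧ q.2 = true} = ∫⁻ z' in A, a z' ∂ν)
    (x0 : X) (A : Set X) (hA : MeasurableSet A) :
    μ ((fun q : X × Bool => if q.2 then q.1 else x0) ⁻¹' A)
      = ∫⁻ z' in A, a z' ∂ν + A.indicator (fun _ => (1:ℝ≥0∞)) x0 * ∫⁻ z', (1 - a z') ∂ν := by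
  have hint : ∫⁻ z', a z' ∂ν ≠ ∞ := by
    refine ne_of_lt (lt_of_le_of_lt (le_trans (lintegral_mono ha1) ?_) ENNReal.one_lt_top)
    simp
  have hsub : ∫⁻ z', (1 - a z') ∂ν = 1 - ∫⁻ z', a z' ∂ν := by
    rw [lintegral_sub hameas hint (ae_of_all _ ha1)]; simp
  have htrue : μ {q : X × Bool | q.2 = true} = ∫⁻ z', a z' ∂ν := by
    have h := hb univ MeasurableSet.univ
    simpa using h
  have hmt : MeasurableSet {q : X × Bool | q.2 = true} :=
    measurable_snd (measurableSet_singleton true)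
  have hmf : MeasurableSet {q : X × Bool | x0 ∈ A ∧ q.2 = false} := by
    by_cases hx0 : x0 ∈ A
    · have he : {q : X × Bool | x0 ∈ A ∧ q.2 = false} = Prod.snd ⁻¹' {false} := by
        ext q; simp [hx0]
      rw [he]; exact measurable_snd (measurableSet_singleton false)
    · simp [hx0]
  have hdecomp : (fun q : X × Bool => if q.2 then q.1 else x0) ⁻¹' A
      = {q : X × Bool | q.1 ∈ A ∧ q.2 = true} ∪ {q : X × Bool | x0 ∈ A ∧ q.2 = false} := by
    ext ⟨z, b⟩; cases b <;> simp
  have hdisj : Disjoint {q : X × Bool | q.1 ∈ A ∧ q.2 = true}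
      {q : X × Bool | x0 ∈ A ∧ q.2 = false} := by
    rw [Set.disjoint_left]
    rintro ⟨z, b⟩ ⟨_, h1⟩ ⟨_, h2⟩
    simp_all
  rw [hdecomp, measure_union hdisj hmf, hb A hA]
  congr 1
  by_cases hx0 : x0 ∈ A
  · have : {q : X × Bool | x0 ∈ A ∧ q.2 = false} = {q : X × Bool | q.2 = true}ᶜ := by
      ext ⟨z, b⟩; cases b <;> simp [hx0]
    rw [this, measure_compl hmt (measure_ne_top μ _), htrue, hsub]
    simp [hx0]
  · simp [hx0]

theorem stmt17 {X : Type*} [MeasurableSpace X] [MeasurableSingletonClass X]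
    (Q : X → Measure X) [∀ z, IsProbabilityMeasure (Q z)]
    (a : X → X → ℝ≥0∞) (ha1 : ∀ z z', a z z' ≤ 1) (haxx : ∀ z, a z z = 1)
    (hameas : ∀ z, Measurable (a z))
    -- the MH-like kernel generated by Q and a
    (P : X → Measure X)
    (hP : ∀ z (A : Set X), MeasurableSet A →
      P z A = ∫⁻ z' in A, a z z' ∂(Q z)
        + A.indicator (fun _ => (1 : ℝ≥0∞)) z * ∫⁻ z', (1 - a z z') ∂(Q z))
    (x y : X)
    -- a proposal coupling at (x,y)
    (Qbar : Measure (X × X)) [IsProbabilityMeasure Qbar]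
    (hQ1 : ∀ A : Set X, MeasurableSet A → Qbar (A ×ˢ univ) = Q x A)
    (hQ2 : ∀ A : Set X, MeasurableSet A → Qbar (univ ×ˢ A) = Q y A)
    -- joint law ξ of ((x′,y′),(b_x,b_y)) realizing the acceptance indicator coupling
    (ξ : Measure ((X × X) × (Bool × Bool))) [IsProbabilityMeasure ξ]
    (hξQ : ∀ A : Set (X × X), MeasurableSet A →
      ξ (A ×ˢ (univ : Set (Bool × Bool))) = Qbar A)
    -- P(b_x = 1 | x,y,x′) = a(x,x′) for Q(x,·)-a.a. x′, stated at the level of joint laws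
    (hbx : ∀ A : Set X, MeasurableSet A →
      ξ {p | p.1.1 ∈ A ∧ p.2.1 = true} = ∫⁻ x' in A, a x x' ∂(Q x))
    (hby : ∀ A : Set X, MeasurableSet A →
      ξ {p | p.1.2 ∈ A ∧ p.2.2 = true} = ∫⁻ y' in A, a y y' ∂(Q y))
    -- P̄((x,y),·) is the law of (X,Y)
    (Pbar : Measure (X × X))
    (hPbar : Pbar = ξ.map (fun p : (X × X) × (Bool × Bool) =>
      (if p.2.1 then p.1.1 else x, if p.2.2 then p.1.2 else y))) :
    ∀ A : Set X, MeasurableSet A →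
      Pbar (A ×ˢ univ) = P x A ∧ Pbar (univ ×ˢ A) = P y A := by
  have hp1 : MeasurableSet {p : (X × X) × (Bool × Bool) | p.2.1 = true} :=
    (measurable_fst.comp measurable_snd) (measurableSet_singleton true)
  have hp2 : MeasurableSet {p : (X × X) × (Bool × Bool) | p.2.2 = true} :=
    (measurable_snd.comp measurable_snd) (measurableSet_singleton true)
  have hf : Measurable (fun p : (X × X) × (Bool × Bool) =>
      (if p.2.1 then p.1.1 else x, if p.2.2 then p.1.2 else y)) := by
    refine Measurable.prodMk ?_ ?_
    · exact Measurable.ite hp1 (measurable_fst.comp measurable_fst) measurable_const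
    · exact Measurable.ite hp2 (measurable_snd.comp measurable_fst) measurable_const
  have hg1 : Measurable (fun p : (X × X) × (Bool × Bool) => (p.1.1, p.2.1)) :=
    (measurable_fst.comp measurable_fst).prodMk (measurable_fst.comp measurable_snd)
  have hg2 : Measurable (fun p : (X × X) × (Bool × Bool) => (p.1.2, p.2.2)) :=
    (measurable_snd.comp measurable_fst).prodMk (measurable_snd.comp measurable_snd)
  have hh1 : Measurable (fun q : X × Bool => if q.2 then q.1 else x) :=
    Measurable.ite (measurable_snd (measurableSet_singleton true)) measurable_fst
      measurable_const
  have hh2 : Measurable (fun q : X × Bool => if q.2 then q.1 else y) :=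
    Measurable.ite (measurable_snd (measurableSet_singleton true)) measurable_fst
      measurable_const
  set μ1 : Measure (X × Bool) := ξ.map (fun p => (p.1.1, p.2.1)) with hμ1
  set μ2 : Measure (X × Bool) := ξ.map (fun p => (p.1.2, p.2.2)) with hμ2
  haveI : IsProbabilityMeasure μ1 := Measure.isProbabilityMeasure_map hg1.aemeasurable
  haveI : IsProbabilityMeasure μ2 := Measure.isProbabilityMeasure_map hg2.aemeasurable
  have hb1 : ∀ A : Set X, MeasurableSet A →
      μ1 {q | q.1 ∈ A ∧ q.2 = true} = ∫⁻ z' in A, a x z' ∂(Q x) := by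
    intro A hA
    have hs : MeasurableSet {q : X × Bool | q.1 ∈ A ∧ q.2 = true} :=
      (measurable_fst hA).inter (measurable_snd (measurableSet_singleton true))
    rw [hμ1, Measure.map_apply hg1 hs]
    exact hbx A hA
  have hb2 : ∀ A : Set X, MeasurableSet A →
      μ2 {q | q.1 ∈ A ∧ q.2 = true} = ∫⁻ z' in A, a y z' ∂(Q y) := by
    intro A hA
    have hs : MeasurableSet {q : X × Bool | q.1 ∈ A ∧ q.2 = true} :=
      (measurable_fst hA).inter (measurable_snd (measurableSet_singleton true))
    rw [hμ2, Measure.map_apply hg2 hs]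
    exact hby A hA
  intro A hA
  constructor
  · rw [hPbar, Measure.map_apply hf (hA.prod MeasurableSet.univ), hP x A hA]
    have hset : (fun p : (X × X) × (Bool × Bool) =>
        (if p.2.1 then p.1.1 else x, if p.2.2 then p.1.2 else y)) ⁻¹' (A ×ˢ univ)
        = (fun p : (X × X) × (Bool × Bool) => (p.1.1, p.2.1)) ⁻¹'
          ((fun q : X × Bool => if q.2 then q.1 else x) ⁻¹' A) := by
      ext p; simp [Set.mem_prod]
    rw [hset, ← Measure.map_apply hg1 (hh1 hA)]
    exact key17 (Q x) (a x) (ha1 x) (hameas x) μ1 hb1 x A hA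
  · rw [hPbar, Measure.map_apply hf (MeasurableSet.univ.prod hA), hP y A hA]
    have hset : (fun p : (X × X) × (Bool × Bool) =>
        (if p.2.1 then p.1.1 else x, if p.2.2 then p.1.2 else y)) ⁻¹' (univ ×ˢ A)
        = (fun p : (X × X) × (Bool × Bool) => (p.1.2, p.2.2)) ⁻¹'
          ((fun q : X × Bool => if q.2 then q.1 else y) ⁻¹' A) := by
      ext p; simp [Set.mem_prod]
    rw [hset, ← Measure.map_apply hg2 (hh2 hA)]
    exact key17 (Q y) (a y) (ha1 y) (hameas y) μ2 hb2 y A hA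
end

section
/- Suppose a Markov kernel P on (X,F) with stationary distribution π satisfies the uniform minorization condition P(x,A) ≥ ε·ν(A) for all x ∈ X and A ∈ F, where ε ∈ (0,1] and ν is a probability measure. Then for all x ∈ X and n ≥ 1, ‖Pⁿ(x,·) − π(·)‖_TV ≤ (1 − ε)ⁿ. -/
open MeasureTheory Set
open scoped ENNReal

/-!
Doeblin's coupling argument. By the minorization, one step of the chain sends a fraction `ε` of
any mass to `ν`, whatever the starting point. Hence, inductively, the laws `Pⁿ(x, ·)` for all
`x` and `π = πPⁿ` all dominate one common measure of mass at least `1 - (1 - ε)ⁿ`; and two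
probability measures dominating a common measure of mass `c` differ by at most `1 - c` on every
set.
-/

namespace ENNReal

lemma one_sub_add_one_sub_mul (c ε : ℝ≥0∞) :
    1 - (c + (1 - c) * ε) = (1 - c) * (1 - ε) := by
  rw [← tsub_tsub, ENNReal.mul_sub fun _ _ => by finiteness, mul_one]

end ENNReal

namespace MeasureTheory.Measure

variable {X : Type*} [MeasurableSpace X]

lemma apply_add_univ_le_one_add {m μ₁ μ₂ : Measure X} [IsProbabilityMeasure μ₁]
    (h₁ : m ≤ μ₁) (h₂ : m ≤ μ₂) {A : Set X} (hA : MeasurableSet A) :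
    μ₁ A + m univ ≤ 1 + μ₂ A := by
  calc μ₁ A + m univ = μ₁ A + m Aᶜ + m A := by
        rw [add_assoc, add_comm (m Aᶜ), measure_add_measure_compl hA]
    _ ≤ μ₁ A + μ₁ Aᶜ + μ₂ A := by gcongr
    _ = 1 + μ₂ A := by rw [measure_add_measure_compl hA, measure_univ]

lemma toReal_apply_sub_le_one_sub {m μ₁ μ₂ : Measure X} [IsProbabilityMeasure μ₁]
    [IsProbabilityMeasure μ₂] (h₁ : m ≤ μ₁) (h₂ : m ≤ μ₂) {A : Set X}
    (hA : MeasurableSet A) :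
    (μ₁ A).toReal - (μ₂ A).toReal ≤ 1 - (m univ).toReal := by
  have : IsFiniteMeasure m := isFiniteMeasure_of_le μ₁ h₁
  have h := ENNReal.toReal_mono (by finiteness) (apply_add_univ_le_one_add h₁ h₂ hA)
  rw [ENNReal.toReal_add (by finiteness) (by finiteness),
    ENNReal.toReal_add (by finiteness) (by finiteness), ENNReal.toReal_one] at h
  linarith

lemma tvDist_le_one_sub_of_le {m μ₁ μ₂ : Measure X} [IsProbabilityMeasure μ₁]
    [IsProbabilityMeasure μ₂] (h₁ : m ≤ μ₁) (h₂ : m ≤ μ₂) :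
    tvDist μ₁ μ₂ ≤ (1 - m univ).toReal := by
  have hm : m univ ≤ 1 := (h₁ univ).trans_eq measure_univ
  refine Real.iSup_le (fun A => ?_) ENNReal.toReal_nonneg
  rw [ENNReal.toReal_sub_of_le hm ENNReal.one_ne_top, ENNReal.toReal_one, abs_sub_le_iff]
  exact ⟨toReal_apply_sub_le_one_sub h₁ h₂ A.2, toReal_apply_sub_le_one_sub h₂ h₁ A.2⟩

variable {P : X → Measure X} {ε : ℝ≥0∞} {ν : Measure X}

/-- One step of Doeblin's coupling: each unit of the mass of `μ - m` is sent by `P` onto at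
least `ε ν`. -/
lemma bind_add_smul_le_bind (hP : Measurable P)
    (hminor : ∀ x A, MeasurableSet A → ε * ν A ≤ P x A)
    {m μ : Measure X} [IsFiniteMeasure m] (h : m ≤ μ) :
    m.bind P + ((μ univ - m univ) * ε) • ν ≤ μ.bind P := by
  refine le_iff.mpr fun A hA => ?_
  have hrest : (μ univ - m univ) * ε * ν A ≤ ∫⁻ y, P y A ∂(μ - m) := by
    calc (μ univ - m univ) * ε * ν A = ∫⁻ _, ε * ν A ∂(μ - m) := by
          rw [lintegral_const, sub_apply MeasurableSet.univ h]; ring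
      _ ≤ ∫⁻ y, P y A ∂(μ - m) := lintegral_mono fun y => hminor y A hA
  calc (m.bind P + ((μ univ - m univ) * ε) • ν) A
      = ∫⁻ y, P y A ∂m + (μ univ - m univ) * ε * ν A := by
        rw [add_apply, smul_apply, smul_eq_mul, bind_apply hA hP.aemeasurable]
    _ ≤ ∫⁻ y, P y A ∂m + ∫⁻ y, P y A ∂(μ - m) := by gcongr
    _ = (μ.bind P) A := by
        rw [bind_apply hA hP.aemeasurable, ← lintegral_add_measure, add_comm,
          sub_add_cancel_of_le h]

lemma bind_apply_univ (hP : Measurable P) [∀ x, IsProbabilityMeasure (P x)] (m : Measure X) :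
    m.bind P univ = m univ := by
  simp [bind_apply MeasurableSet.univ hP.aemeasurable]

end MeasureTheory.Measure

lemma isProbabilityMeasure_iterate {X : Type*} [MeasurableSpace X]
    {P : X → Measure X} [∀ x, IsProbabilityMeasure (P x)] (hP : Measurable P)
    {Pn : ℕ → X → Measure X} (hPn0 : ∀ x, Pn 0 x = Measure.dirac x)
    (hPnsucc : ∀ n x, Pn (n + 1) x = (Pn n x).bind P) (n : ℕ) (x : X) :
    IsProbabilityMeasure (Pn n x) := by
  induction n generalizing x with
  | zero => rw [hPn0]; infer_instance
  | succ n ih =>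
    rw [hPnsucc]
    exact isProbabilityMeasure_bind hP.aemeasurable (.of_forall inferInstance)

lemma exists_common_minorant_iterate {X : Type*} [MeasurableSpace X]
    {P : X → Measure X} [∀ x, IsProbabilityMeasure (P x)] (hP : Measurable P)
    {π : Measure X} [IsProbabilityMeasure π] (hinv : π.bind P = π)
    {ε : ℝ≥0∞} {ν : Measure X} [IsProbabilityMeasure ν]
    (hminor : ∀ x A, MeasurableSet A → ε * ν A ≤ P x A)
    {Pn : ℕ → X → Measure X} (hprob : ∀ n x, IsProbabilityMeasure (Pn n x))
    (hPnsucc : ∀ n x, Pn (n + 1) x = (Pn n x).bind P) (n : ℕ) :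
    ∃ m : Measure X, (∀ x, m ≤ Pn n x) ∧ m ≤ π ∧ 1 - m univ ≤ (1 - ε) ^ n := by
  induction n with
  | zero => exact ⟨0, fun _ => Measure.zero_le _, Measure.zero_le _, by simp⟩
  | succ n ih =>
    obtain ⟨m, hm, hmπ, hmass⟩ := ih
    have : IsFiniteMeasure m := isFiniteMeasure_of_le π hmπ
    refine ⟨m.bind P + ((1 - m univ) * ε) • ν, fun x => ?_, ?_, ?_⟩
    · have := Measure.bind_add_smul_le_bind hP hminor (hm x)
      rwa [measure_univ, ← hPnsucc] at this
    · have := Measure.bind_add_smul_le_bind hP hminor hmπ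
      rwa [measure_univ, hinv] at this
    · rw [Measure.add_apply, Measure.smul_apply, smul_eq_mul, Measure.bind_apply_univ hP,
        measure_univ (μ := ν), mul_one, ENNReal.one_sub_add_one_sub_mul, pow_succ]
      gcongr

theorem stmt19_general {X : Type*} [MeasurableSpace X]
    (P : X → Measure X) [∀ x, IsProbabilityMeasure (P x)]
    (hPmeas : Measurable P)
    (π : Measure X) [IsProbabilityMeasure π]
    (hinv : π.bind P = π)
    (ε : ℝ≥0∞) (hε1 : ε ≤ 1)
    (ν : Measure X) [IsProbabilityMeasure ν]
    (hminor : ∀ x (A : Set X), MeasurableSet A → ε * ν A ≤ P x A)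
    -- the n-step kernel
    (Pn : ℕ → X → Measure X)
    (hPn0 : ∀ x, Pn 0 x = Measure.dirac x)
    (hPnsucc : ∀ n x, Pn (n + 1) x = (Pn n x).bind P) :
    ∀ x (n : ℕ), 1 ≤ n → tvDist (Pn n x) π ≤ (1 - ε.toReal) ^ n := by
  have hprob := isProbabilityMeasure_iterate hPmeas hPn0 hPnsucc
  intro x n _
  obtain ⟨m, hm, hmπ, hmass⟩ :=
    exists_common_minorant_iterate hPmeas hinv hminor hprob hPnsucc n
  calc tvDist (Pn n x) π ≤ (1 - m univ).toReal := Measure.tvDist_le_one_sub_of_le (hm x) hmπ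
    _ ≤ ((1 - ε) ^ n).toReal := ENNReal.toReal_mono (by finiteness) hmass
    _ = (1 - ε.toReal) ^ n := by
      rw [ENNReal.toReal_pow, ENNReal.toReal_sub_of_le hε1 ENNReal.one_ne_top, ENNReal.toReal_one]

theorem stmt19 {X : Type*} [MeasurableSpace X]
    (P : X → Measure X) [∀ x, IsProbabilityMeasure (P x)]
    (hPmeas : Measurable P)
    (π : Measure X) [IsProbabilityMeasure π]
    (hinv : π.bind P = π)
    (ε : ℝ≥0∞) (hε : 0 < ε) (hε1 : ε ≤ 1)
    (ν : Measure X) [IsProbabilityMeasure ν]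
    (hminor : ∀ x (A : Set X), MeasurableSet A → ε * ν A ≤ P x A)
    -- the n-step kernel
    (Pn : ℕ → X → Measure X)
    (hPn0 : ∀ x, Pn 0 x = Measure.dirac x)
    (hPnsucc : ∀ n x, Pn (n + 1) x = (Pn n x).bind P) :
    ∀ x (n : ℕ), 1 ≤ n → tvDist (Pn n x) π ≤ (1 - ε.toReal) ^ n :=
  stmt19_general P hPmeas π hinv ε hε1 ν hminor Pn hPn0 hPnsucc
end
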